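/- arXiv:1810.11938 — 7 statements merged into one kernel-verified Lean document; each statement's English description precedes it below -/
import Mathlib

section
/- Let n ≥ 2 be an integer and let G = {2^(n-1), 2^(n-1) + 2^(n-2), ..., 2^(n-1) + 2^(n-2) + ... + 2 + 1}, i.e. G = {∑_{i=1}^{b} 2^(n-i) : 1 ≤ b ≤ n}. Let l : ℕ⁺ → ℕ be a sequence with l(1) = 2^(n-1) and l(k+1) − l(k) ∈ G for all k ≥ 1. Set D₁ = {l(k) : k ≥ 1} and, for 2 ≤ j ≤ n, D_j = D₁ ± 2^(n-2) ± 2^(n-3) ± ... ± 2^(n-j). Then the sets D₁, D₂, ..., D_n are pairwise disjoint and their union is the set of all positive integers. -/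
/-!
Shifted by `2 ^ (n-1)`, the sums `± 2^(n-2) ± ⋯ ± 2^(n-j)` are exactly the integers of
`(0, 2^n)` with 2-adic valuation `n - j` (their signs are the binary digits of the odd part).
Hence `m ∈ D_j` iff for some `k` the offset `u = m - l k + 2^(n-1)` lies in `(0, 2^n)` and has
valuation `n - j`. These windows `(l k - 2^(n-1), l k + 2^(n-1))` cover the positive integers,
since consecutive gaps `l (k+1) - l k = 2^n - 2^c` are below `2^n`, and only consecutive windows
meet, since the gaps are at least `2^(n-1)`. On the overlap of two consecutive windows the offsets
`u` and `u - (2^n - 2^c)` are both positive with `u < 2^n`, which forces `v₂(u) < c`; so the two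
offsets have the same valuation.
-/

/-- `S ± r = {s + r : s ∈ S} ∪ {s - r : s ∈ S}`. -/
def pmSet (S : Set ℤ) (r : ℤ) : Set ℤ :=
  {x | ∃ s ∈ S, x = s + r} ∪ {x | ∃ s ∈ S, x = s - r}

/-- The `j`-th column: `D₁` for `j ≤ 1`, and
`D_{j+1} = D_j ± 2^(n-(j+1))` for `j ≥ 1`. -/
def Dcol (n : ℕ) (D1 : Set ℤ) : ℕ → Set ℤ
  | 0 => D1
  | 1 => D1
  | (j+2) => pmSet (Dcol n D1 (j+1)) ((2:ℤ) ^ (n - (j+2)))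

lemma mem_pmSet {S : Set ℤ} {r x : ℤ} : x ∈ pmSet S r ↔ x - r ∈ S ∨ x + r ∈ S := by
  simp only [pmSet, Set.mem_union, Set.mem_ofPred_eq]
  constructor
  · rintro (⟨s, hs, rfl⟩ | ⟨s, hs, rfl⟩) <;> simp [hs]
  · rintro (h | h)
    · exact Or.inl ⟨_, h, by ring⟩
    · exact Or.inr ⟨_, h, by ring⟩

lemma Dcol_succ (n : ℕ) (D1 : Set ℤ) {j : ℕ} (hj : 1 ≤ j) :
    Dcol n D1 (j + 1) = pmSet (Dcol n D1 j) (2 ^ (n - (j + 1))) := by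
  obtain ⟨i, rfl⟩ := Nat.exists_eq_add_of_le' hj
  rfl

def oddMultiples (q K : ℤ) : Set ℤ :=
  {u | ∃ s, 0 ≤ s ∧ s < K ∧ u = q * (2 * s + 1)}

lemma pmSet_oddMultiples (q K : ℤ) :
    pmSet (oddMultiples (2 * q) K) q = oddMultiples q (2 * K) := by
  ext u
  simp only [mem_pmSet, oddMultiples, Set.mem_ofPred_eq]
  constructor
  · rintro (⟨s, hs0, hsK, hu⟩ | ⟨s, hs0, hsK, hu⟩)
    · exact ⟨2 * s + 1, by omega, by omega, by linear_combination hu⟩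
    · exact ⟨2 * s, by omega, by omega, by linear_combination hu⟩
  · rintro ⟨s, hs0, hsK, rfl⟩
    obtain ⟨t, rfl | rfl⟩ := Int.even_or_odd' s
    · exact Or.inr ⟨t, by omega, by omega, by ring⟩
    · exact Or.inl ⟨t, by omega, by omega, by ring⟩

lemma mem_Dcol_iff_oddMultiples {n j : ℕ} {D1 : Set ℤ} {m : ℤ} (hj : 1 ≤ j) (hjn : j ≤ n) :
    m ∈ Dcol n D1 j ↔
      ∃ d ∈ D1, m - d + 2 ^ (n - 1) ∈ oddMultiples (2 ^ (n - j)) (2 ^ (j - 1)) := by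
  induction j, hj using Nat.le_induction generalizing m with
  | base =>
    simp only [Dcol, oddMultiples, Set.mem_ofPred_eq]
    constructor
    · intro hm
      exact ⟨m, hm, 0, le_rfl, by norm_num, by ring⟩
    · rintro ⟨d, hd, s, hs0, hs1, h⟩
      obtain rfl : s = 0 := by omega
      obtain rfl : m = d := by linarith
      exact hd
  | succ j hj ih =>
    have hq : (2 : ℤ) ^ (n - j) = 2 * 2 ^ (n - (j + 1)) := by
      rw [← pow_succ']; congr 1; omega
    have hK : (2 : ℤ) ^ (j + 1 - 1) = 2 * 2 ^ (j - 1) := by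
      rw [← pow_succ']; congr 1; omega
    rw [Dcol_succ n D1 hj, mem_pmSet, ih (by omega), ih (by omega), hK,
      ← pmSet_oddMultiples, ← hq]
    have hsub : ∀ d r : ℤ, m - r - d + 2 ^ (n - 1) = m - d + 2 ^ (n - 1) - r := fun _ _ => by ring
    have hadd : ∀ d r : ℤ, m + r - d + 2 ^ (n - 1) = m - d + 2 ^ (n - 1) + r := fun _ _ => by ring
    simp only [mem_pmSet, hsub, hadd, and_or_left, exists_or]

def twoAdicLayer (n a : ℕ) : Set ℤ :=
  {u | 0 < u ∧ u < 2 ^ n ∧ emultiplicity 2 u = a}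

lemma oddMultiples_two_pow (a b : ℕ) :
    oddMultiples (2 ^ a) (2 ^ b) = twoAdicLayer (a + b + 1) a := by
  have h2a : (0 : ℤ) < 2 ^ a := by positivity
  ext u
  simp only [oddMultiples, twoAdicLayer, Set.mem_ofPred_eq, emultiplicity_eq_coe, pow_add,
    pow_succ, mul_assoc]
  constructor
  · rintro ⟨s, hs0, hsK, rfl⟩
    refine ⟨by positivity, mul_lt_mul_of_pos_left (by omega) h2a, dvd_mul_right _ _, ?_⟩
    rw [mul_dvd_mul_iff_left h2a.ne']
    omega
  · rintro ⟨hu0, hult, ⟨w, rfl⟩, hndvd⟩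
    rw [mul_dvd_mul_iff_left h2a.ne'] at hndvd
    have hw0 : 0 < w := pos_of_mul_pos_right hu0 h2a.le
    have hwlt : w < 2 ^ b * 2 := lt_of_mul_lt_mul_left hult h2a.le
    exact ⟨w / 2, by omega, by omega, by congr 1; omega⟩

lemma mem_Dcol_iff {n j : ℕ} {D1 : Set ℤ} {m : ℤ} (hj : 1 ≤ j) (hjn : j ≤ n) :
    m ∈ Dcol n D1 j ↔ ∃ d ∈ D1, m - d + 2 ^ (n - 1) ∈ twoAdicLayer n (n - j) := by
  rw [mem_Dcol_iff_oddMultiples hj hjn, oddMultiples_two_pow,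
    show n - j + (j - 1) + 1 = n by omega]

lemma mem_Dcol_iff_of_seq {n j : ℕ} {l : ℕ → ℤ} {m : ℤ} (hj : 1 ≤ j) (hjn : j ≤ n) :
    m ∈ Dcol n {x | ∃ k, 1 ≤ k ∧ x = l k} j ↔
      ∃ k, m - (l (k + 1) - 2 ^ (n - 1)) ∈ twoAdicLayer n (n - j) := by
  rw [mem_Dcol_iff hj hjn]
  constructor
  · rintro ⟨_, ⟨k, hk, rfl⟩, h⟩
    obtain ⟨i, rfl⟩ := Nat.exists_eq_add_of_le' hk
    exact ⟨i, by rwa [← sub_add]⟩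
  · rintro ⟨k, h⟩
    exact ⟨l (k + 1), ⟨k + 1, by omega, rfl⟩, by rwa [sub_add]⟩

lemma exists_mem_twoAdicLayer {n : ℕ} {u : ℤ} (hu0 : 0 < u) (hun : u < 2 ^ n) :
    ∃ a < n, u ∈ twoAdicLayer n a := by
  have hfin : FiniteMultiplicity (2 : ℤ) u := Int.finiteMultiplicity_iff.2 ⟨by decide, hu0.ne'⟩
  refine ⟨multiplicity 2 u, ?_, hu0, hun, hfin.emultiplicity_eq_multiplicity⟩
  have hle : (2 : ℤ) ^ multiplicity 2 u ≤ u := Int.le_of_dvd hu0 (pow_multiplicity_dvd 2 u)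
  exact (pow_lt_pow_iff_right₀ (by norm_num : (1 : ℤ) < 2)).1 (hle.trans_lt hun)

lemma emultiplicity_two_sub_two_pow_sub_two_pow {n c : ℕ} {u : ℤ} (hc : c ≤ n) (hun : u < 2 ^ n)
    (hpos : 0 < u - (2 ^ n - 2 ^ c)) :
    emultiplicity 2 (u - (2 ^ n - 2 ^ c)) = emultiplicity 2 u := by
  -- a multiple of `2 ^ c` below `2 ^ n` is at most `2 ^ n - 2 ^ c`
  have hlt : emultiplicity 2 u < c := by
    rw [emultiplicity_lt_iff_not_dvd]
    rintro ⟨x, rfl⟩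
    have h2c : (0 : ℤ) < 2 ^ c := by positivity
    have hn : (2 : ℤ) ^ n = 2 ^ c * 2 ^ (n - c) := by rw [← pow_add]; congr 1; omega
    rw [hn] at hun hpos
    have h1 : x < 2 ^ (n - c) := lt_of_mul_lt_mul_left hun h2c.le
    have h2 : 2 ^ (n - c) < x + 1 := lt_of_mul_lt_mul_left (by linarith) h2c.le
    omega
  have hgap : (c : ℕ∞) ≤ emultiplicity 2 ((2 : ℤ) ^ n - 2 ^ c) :=
    le_emultiplicity_of_pow_dvd (dvd_sub (pow_dvd_pow 2 hc) dvd_rfl)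
  rw [← emultiplicity_neg, neg_sub, emultiplicity_sub_of_gt (hlt.trans_le hgap)]

lemma sum_Icc_two_pow {n b : ℕ} (hb : b ≤ n) :
    ∑ i ∈ Finset.Icc 1 b, (2 : ℤ) ^ (n - i) = 2 ^ n - 2 ^ (n - b) := by
  induction b with
  | zero => simp
  | succ b ih =>
    rw [Finset.sum_Icc_succ_top (by omega), ih (by omega),
      show n - b = n - (b + 1) + 1 by omega, pow_succ]
    ring

lemma two_pow_le_two_mul_sub_two_pow {n c : ℕ} (hc : c < n) :
    (2 : ℤ) ^ n ≤ 2 * (2 ^ n - 2 ^ c) := by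
  have : (2 : ℤ) ^ c * 2 ≤ 2 ^ n := by
    rw [← pow_succ]; exact pow_le_pow_right₀ (by norm_num) hc
  linarith

section Windows

open Filter

variable {n : ℕ} {L : ℕ → ℤ}

lemma strictMono_of_gaps (hL : ∀ k, ∃ c < n, L (k + 1) - L k = 2 ^ n - 2 ^ c) :
    StrictMono L := by
  refine strictMono_nat_of_lt_succ fun k => ?_
  obtain ⟨c, hc, h⟩ := hL k
  have := two_pow_le_two_mul_sub_two_pow hc
  have : (0 : ℤ) < 2 ^ n := by positivity
  linarith

lemma tendsto_atTop_of_gaps (hL : ∀ k, ∃ c < n, L (k + 1) - L k = 2 ^ n - 2 ^ c) :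
    Tendsto L atTop atTop := by
  have hlin : ∀ k : ℕ, L 0 + k ≤ L k := by
    intro k
    induction k with
    | zero => simp
    | succ k ih =>
      have := (strictMono_of_gaps hL) k.lt_succ_self
      push_cast
      linarith
  refine tendsto_atTop_mono hlin (tendsto_atTop_add_const_left _ _ ?_)
  exact tendsto_natCast_atTop_atTop

lemma add_two_pow_le_of_gaps (hL : ∀ k, ∃ c < n, L (k + 1) - L k = 2 ^ n - 2 ^ c) (k : ℕ) :
    L k + 2 ^ n ≤ L (k + 2) := by
  obtain ⟨c, hc, h⟩ := hL k
  obtain ⟨c', hc', h'⟩ := hL (k + 1)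
  have := two_pow_le_two_mul_sub_two_pow hc
  have := two_pow_le_two_mul_sub_two_pow hc'
  linarith

lemma exists_sub_mem_Ioo_of_gaps (hL : ∀ k, ∃ c < n, L (k + 1) - L k = 2 ^ n - 2 ^ c) {m : ℤ}
    (hm : L 0 < m) : ∃ k, m - L k ∈ Set.Ioo 0 (2 ^ n) := by
  obtain ⟨k, hk, hk'⟩ :=
    (strictMono_of_gaps hL).exists_between_of_tendsto_atTop (tendsto_atTop_of_gaps hL) hm
  obtain ⟨c, -, h⟩ := hL k
  have : (0 : ℤ) < 2 ^ c := by positivity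
  exact ⟨k, by linarith, by linarith⟩

lemma eq_of_sub_mem_twoAdicLayer (hL : ∀ k, ∃ c < n, L (k + 1) - L k = 2 ^ n - 2 ^ c)
    {m : ℤ} {k k' a a' : ℕ} (h : m - L k ∈ twoAdicLayer n a)
    (h' : m - L k' ∈ twoAdicLayer n a') : a = a' := by
  wlog hkk : k ≤ k' generalizing k k' a a'
  · exact (this h' h (by omega)).symm
  obtain ⟨hpos, hlt, hval⟩ := h
  obtain ⟨hpos', -, hval'⟩ := h'
  suffices emultiplicity 2 (m - L k') = emultiplicity 2 (m - L k) by
    rw [hval, hval'] at this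
    exact_mod_cast this.symm
  obtain rfl | rfl | hk2 : k' = k ∨ k' = k + 1 ∨ k + 2 ≤ k' := by omega
  · rfl
  · obtain ⟨c, hc, hgap⟩ := hL k
    rw [show m - L (k + 1) = m - L k - (2 ^ n - 2 ^ c) by linarith] at hpos' ⊢
    exact emultiplicity_two_sub_two_pow_sub_two_pow hc.le hlt hpos'
  · have := add_two_pow_le_of_gaps hL k
    have := (strictMono_of_gaps hL).monotone hk2
    linarith

end Windows

theorem n_set_partition_general (n : ℕ) (l : ℕ → ℤ)
    (hl1 : l 1 = 2 ^ (n-1))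
    (hld : ∀ k, 1 ≤ k → ∃ b, 1 ≤ b ∧ b ≤ n ∧
      l (k+1) - l k = ∑ i ∈ Finset.Icc 1 b, (2:ℤ) ^ (n - i)) :
    Set.PairwiseDisjoint (Set.Icc 1 n)
      (fun j => Dcol n {x | ∃ k, 1 ≤ k ∧ x = l k} j) ∧
    (⋃ j ∈ Set.Icc 1 n, Dcol n {x | ∃ k, 1 ≤ k ∧ x = l k} j) = {m : ℤ | 0 < m} := by
  set L : ℕ → ℤ := fun k => l (k + 1) - 2 ^ (n - 1)
  have hL0 : L 0 = 0 := by simp [L, hl1]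
  have hL : ∀ k, ∃ c < n, L (k + 1) - L k = 2 ^ n - 2 ^ c := by
    intro k
    obtain ⟨b, hb1, hbn, h⟩ := hld (k + 1) (by omega)
    refine ⟨n - b, by omega, ?_⟩
    rw [← sum_Icc_two_pow hbn, ← h]
    ring
  have hD : ∀ j ∈ Set.Icc 1 n, ∀ m, m ∈ Dcol n {x | ∃ k, 1 ≤ k ∧ x = l k} j ↔
      ∃ k, m - L k ∈ twoAdicLayer n (n - j) :=
    fun j hj m => mem_Dcol_iff_of_seq hj.1 hj.2
  refine ⟨fun j hj j' hj' hne => Set.disjoint_left.2 fun m hm hm' => hne ?_, ?_⟩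
  · obtain ⟨k, hk⟩ := (hD j hj m).1 hm
    obtain ⟨k', hk'⟩ := (hD j' hj' m).1 hm'
    have := eq_of_sub_mem_twoAdicLayer hL hk hk'
    grind
  ext m
  simp only [Set.mem_iUnion, Set.mem_ofPred_eq, exists_prop]
  constructor
  · rintro ⟨j, hj, hm⟩
    obtain ⟨k, hk, -⟩ := (hD j hj m).1 hm
    linarith [(strictMono_of_gaps hL).monotone k.zero_le]
  · intro hm
    obtain ⟨k, hk0, hkn⟩ := exists_sub_mem_Ioo_of_gaps hL (hL0 ▸ hm)
    obtain ⟨a, ha, hmem⟩ := exists_mem_twoAdicLayer hk0 hkn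
    exact ⟨n - a, ⟨by omega, by omega⟩, (hD _ ⟨by omega, by omega⟩ m).2
      ⟨k, by rwa [show n - (n - a) = a by omega]⟩⟩

theorem n_set_partition (n : ℕ) (hn : 2 ≤ n) (l : ℕ → ℤ)
    (hl1 : l 1 = 2 ^ (n-1))
    (hld : ∀ k, 1 ≤ k → ∃ b, 1 ≤ b ∧ b ≤ n ∧
      l (k+1) - l k = ∑ i ∈ Finset.Icc 1 b, (2:ℤ) ^ (n - i)) :
    Set.PairwiseDisjoint (Set.Icc 1 n)
      (fun j => Dcol n {x | ∃ k, 1 ≤ k ∧ x = l k} j) ∧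
    (⋃ j ∈ Set.Icc 1 n, Dcol n {x | ∃ k, 1 ≤ k ∧ x = l k} j) = {m : ℤ | 0 < m} :=
  n_set_partition_general n l hl1 hld
end

section
/- Let α be a real number with 1 ≤ α < 2 and let n ≥ 2 be an integer. Define t(k) = (2^(n-1) − 1)·⌊kα⌋ + k for positive integers k. Then t(1) = 2^(n-1) and t(k+1) − t(k) ∈ G = {∑_{i=1}^{b} 2^(n-i) : 1 ≤ b ≤ n} for all k ≥ 1; consequently, the sets D₁ = {t(k) : k ≥ 1} and D_j = D₁ ± 2^(n-2) ± ... ± 2^(n-j) for 2 ≤ j ≤ n are pairwise disjoint and their union is the set of all positive integers. -/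
/-- `t(k) = (2^(n-1) - 1)⌊kα⌋ + k`. -/
noncomputable def tSeq (α : ℝ) (n : ℕ) (k : ℕ) : ℤ :=
  ((2:ℤ) ^ (n-1) - 1) * ⌊(k : ℝ) * α⌋ + k

/-!
Since `⌊α⌋ = 1`, consecutive values of `⌊kα⌋` differ by 1 or 2, so `t` moves in steps of
`2^(n-1)` or `2^n - 1`. The sums `±2^(n-2) ± ⋯ ± 2^(n-j)` are the numbers `c * 2^(n-j)` with `c`
odd and `|c| < 2^(j-1)` (just `0` for `j = 1`). As `j` runs over `1, …, n` these sets partition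
the integers of `(-2^(n-1), 2^(n-1))` by 2-adic valuation, and two of them never meet even modulo
`2^(n-1)`. Every `m > 0` is within `2^(n-1)` of some `t k` because the steps are below `2^n`;
and if `t k + e = t k' + e'`, then `|t k - t k'| ≤ 2^n - 2` forces `t k ≡ t k'` modulo `2^(n-1)`,
hence `e ≡ e'`, hence both offsets come from the same `j`.
-/

open Pointwise

theorem StrictMono.exists_apply_le_lt_apply_succ {β : Type*} [LinearOrder β] [SuccOrder β]
    [IsSuccArchimedean β] {f : ℕ → β} (hf : StrictMono f) {a : ℕ} {x : β} (hx : f a ≤ x) :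
    ∃ k, a ≤ k ∧ f k ≤ x ∧ x < f (k + 1) := by
  classical
  have hex : ∃ k, x < f k := by
    obtain ⟨_, ⟨k, rfl⟩, hk⟩ := not_bddAbove_iff.1 hf.not_bddAbove_range_of_isSuccArchimedean x
    exact ⟨k, hk⟩
  have ha : a < Nat.find hex := by
    by_contra! h
    exact (Nat.find_spec hex).not_ge ((hf.monotone h).trans hx)
  refine ⟨Nat.find hex - 1, by omega, not_lt.1 (Nat.find_min hex (by omega)), ?_⟩
  rw [Nat.sub_add_cancel (by omega)]
  exact Nat.find_spec hex

theorem Int.floor_add_eq_or (x a : ℝ) : ⌊x + a⌋ = ⌊x⌋ + ⌊a⌋ ∨ ⌊x + a⌋ = ⌊x⌋ + ⌊a⌋ + 1 := by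
  have := Int.le_floor_add x a
  have := Int.le_floor_add_floor x a
  omega

theorem sum_Icc_two_pow_sub (n : ℕ) : ∑ i ∈ Finset.Icc 1 n, (2 : ℤ) ^ (n - i) = 2 ^ n - 1 := by
  rw [Finset.sum_nbij' (fun i => n - i) (fun i => n - i) ?_ ?_ ?_ ?_ (fun _ _ => rfl)]
  · simpa using geom_sum_mul (2 : ℤ) n
  all_goals intro i hi; simp at hi ⊢
  all_goals omega

section tSeq

variable {α : ℝ} (hα : ⌊α⌋ = 1)
include hα

theorem tSeq_one (n : ℕ) : tSeq α n 1 = 2 ^ (n - 1) := by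
  simp [tSeq, hα]

theorem tSeq_succ_sub (n k : ℕ) :
    tSeq α n (k + 1) - tSeq α n k = 2 ^ (n - 1) ∨
      tSeq α n (k + 1) - tSeq α n k = 2 * 2 ^ (n - 1) - 1 := by
  have hk : ((k + 1 : ℕ) : ℝ) * α = k * α + α := by push_cast; ring
  unfold tSeq
  rw [hk]
  rcases Int.floor_add_eq_or (k * α) α with h | h <;> rw [h, hα] <;> [left; right] <;>
    push_cast <;> ring

theorem tSeq_strictMono (n : ℕ) : StrictMono (tSeq α n) :=
  strictMono_nat_of_lt_succ fun k => by
    have : (0 : ℤ) < 2 ^ (n - 1) := by positivity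
    rcases tSeq_succ_sub hα n k with h | h <;> linarith

theorem two_pow_dvd_tSeq_sub (n : ℕ) {k k' : ℕ} (hk : k ≤ k')
    (h : tSeq α n k' - tSeq α n k < 2 * 2 ^ (n - 1) - 1) :
    2 ^ (n - 1) ∣ tSeq α n k' - tSeq α n k := by
  obtain ⟨d, rfl⟩ := Nat.exists_eq_add_of_le hk
  match d with
  | 0 => simp
  | 1 =>
    rcases tSeq_succ_sub hα n k with h' | h'
    · exact h' ▸ dvd_rfl
    · omega
  | d + 2 =>
    have hpos : (0 : ℤ) < 2 ^ (n - 1) := by positivity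
    have hstep₁ := tSeq_succ_sub hα n k
    have hstep₂ := tSeq_succ_sub hα n (k + 1)
    have hmono := (tSeq_strictMono hα n).monotone (show k + 1 + 1 ≤ k + (d + 2) by omega)
    omega

theorem exists_abs_sub_tSeq_lt (n : ℕ) {m : ℤ} (hm : 0 < m) :
    ∃ k, 1 ≤ k ∧ |m - tSeq α n k| < 2 ^ (n - 1) := by
  obtain ⟨k, hk, hle, hlt⟩ := (tSeq_strictMono hα n).exists_apply_le_lt_apply_succ
    (x := m + 2 ^ (n - 1) - 1) (by rw [tSeq_one hα]; omega)
  refine ⟨k, hk, abs_lt.2 ⟨by omega, ?_⟩⟩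
  rcases tSeq_succ_sub hα n k with h | h <;> omega

end tSeq

/-- The signed sums `±1 ± 2 ± ⋯ ± 2^(i-1)`, described by their parity and size. -/
def signedPowSums (i : ℕ) : Set ℤ := {c | Odd (c + 2 ^ i) ∧ |c| < 2 ^ i}

theorem mem_signedPowSums_succ {i : ℕ} {c : ℤ} :
    c ∈ signedPowSums (i + 1) ↔ ∃ d ∈ signedPowSums i, c = 2 * d + 1 ∨ c = 2 * d - 1 := by
  simp only [signedPowSums, Set.mem_ofPred_eq, pow_succ, Int.odd_iff, abs_lt]
  generalize (2 : ℤ) ^ i = P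
  constructor
  · rintro ⟨hodd, hlo, hhi⟩
    by_cases hq : ((c - 1) / 2 + P) % 2 = 1
    · exact ⟨(c - 1) / 2, ⟨hq, by omega, by omega⟩, Or.inl (by omega)⟩
    · exact ⟨(c + 1) / 2, ⟨by omega, by omega, by omega⟩, Or.inr (by omega)⟩
  · rintro ⟨d, ⟨hodd, hlo, hhi⟩, rfl | rfl⟩ <;> omega

/-- Indexed by `i = j - 1`: the column `D_{i+1}` is `D₁ + offsets n i`. -/
def offsets (n i : ℕ) : Set ℤ := {e | ∃ c ∈ signedPowSums i, e = c * 2 ^ (n - 1 - i)}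

theorem offsets_zero (n : ℕ) : offsets n 0 = {0} := by
  ext e
  constructor
  · rintro ⟨c, ⟨-, hc⟩, rfl⟩
    simp [Int.abs_lt_one_iff.1 (by simpa using hc)]
  · rintro rfl
    exact ⟨0, ⟨by simp, by simp⟩, by simp⟩

theorem offsets_succ {n i : ℕ} (hi : i + 2 ≤ n) :
    offsets n (i + 1) = offsets n i + {2 ^ (n - (i + 2)), -2 ^ (n - (i + 2))} := by
  have hpow : (2 : ℤ) ^ (n - 1 - i) = 2 * 2 ^ (n - (i + 2)) := by
    rw [← pow_succ']; congr 1; omega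
  have hsub : n - 1 - (i + 1) = n - (i + 2) := by omega
  ext e
  simp only [offsets, Set.mem_add, Set.mem_insert_iff, Set.mem_singleton_iff,
    mem_signedPowSums_succ, hsub, hpow]
  constructor
  · rintro ⟨c, ⟨d, hd, rfl | rfl⟩, rfl⟩
    · exact ⟨_, ⟨d, hd, rfl⟩, _, Or.inl rfl, by ring⟩
    · exact ⟨_, ⟨d, hd, rfl⟩, _, Or.inr rfl, by ring⟩
  · rintro ⟨_, ⟨d, hd, rfl⟩, _, rfl | rfl, rfl⟩
    · exact ⟨2 * d + 1, ⟨d, hd, Or.inl rfl⟩, by ring⟩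
    · exact ⟨2 * d - 1, ⟨d, hd, Or.inr rfl⟩, by ring⟩

theorem abs_lt_of_mem_offsets {n i : ℕ} {e : ℤ} (hi : i < n) (he : e ∈ offsets n i) :
    |e| < 2 ^ (n - 1) := by
  obtain ⟨c, ⟨-, hc⟩, rfl⟩ := he
  rw [abs_mul, abs_pow, abs_two]
  calc |c| * 2 ^ (n - 1 - i) < 2 ^ i * 2 ^ (n - 1 - i) := by gcongr
    _ = 2 ^ (n - 1) := by rw [← pow_add]; congr 1; omega

theorem exists_mem_offsets {n : ℕ} (hn : 1 ≤ n) {e : ℤ} (he : |e| < 2 ^ (n - 1)) :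
    ∃ i < n, e ∈ offsets n i := by
  induction n, hn using Nat.le_induction generalizing e with
  | base =>
    exact ⟨0, one_pos, by simpa [offsets_zero] using Int.abs_lt_one_iff.1 (by simpa using he)⟩
  | succ n hn ih =>
    rcases Int.even_or_odd e with ⟨e', rfl⟩ | hodd
    · have : |e'| < 2 ^ (n - 1) := by
        rw [show n + 1 - 1 = n - 1 + 1 by omega, pow_succ] at he
        rw [abs_lt] at he ⊢; omega
      obtain ⟨i, hi, c, hc, rfl⟩ := ih this
      refine ⟨i, by omega, c, hc, ?_⟩
      rw [show n + 1 - 1 - i = n - 1 - i + 1 by omega, pow_succ]; ring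
    · have h2n : Even ((2 : ℤ) ^ n) := (Int.even_pow' (by omega)).2 even_two
      exact ⟨n, by omega, e, ⟨hodd.add_even h2n, by simpa using he⟩, by simp⟩

theorem not_two_pow_dvd_sub_of_mem_offsets {n i i' : ℕ} {e e' : ℤ} (hii : i < i') (hi' : i' < n)
    (he : e ∈ offsets n i) (he' : e' ∈ offsets n i') : ¬ (2 : ℤ) ^ (n - 1) ∣ e - e' := by
  obtain ⟨c, -, rfl⟩ := he
  obtain ⟨c', ⟨hodd, -⟩, rfl⟩ := he'
  intro hdvd
  have hc' : Odd c' := by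
    simpa using hodd.sub_even ((Int.even_pow' (by omega : i' ≠ 0)).2 even_two)
  have h2 : (2 : ℤ) ^ (n - i') ∣ c' * 2 ^ (n - 1 - i') := by
    have hc : (2 : ℤ) ^ (n - i') ∣ c * 2 ^ (n - 1 - i) :=
      (pow_dvd_pow 2 (by omega)).mul_left c
    simpa using dvd_sub hc ((pow_dvd_pow 2 (by omega : n - i' ≤ n - 1)).trans hdvd)
  rw [show n - i' = n - 1 - i' + 1 by omega, pow_succ, mul_comm c',
    mul_dvd_mul_iff_left (by positivity)] at h2
  exact Int.not_even_iff_odd.2 hc' (even_iff_two_dvd.2 h2)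

theorem eq_of_mem_offsets_of_two_pow_dvd_sub {n i i' : ℕ} {e e' : ℤ} (hi : i < n) (hi' : i' < n)
    (he : e ∈ offsets n i) (he' : e' ∈ offsets n i') (h : (2 : ℤ) ^ (n - 1) ∣ e - e') :
    i = i' := by
  rcases lt_trichotomy i i' with hii | rfl | hii
  · exact absurd h (not_two_pow_dvd_sub_of_mem_offsets hii hi' he he')
  · rfl
  · exact absurd (dvd_sub_comm.1 h) (not_two_pow_dvd_sub_of_mem_offsets hii hi he' he)

theorem pmSet_eq_add (S : Set ℤ) (r : ℤ) : pmSet S r = S + {r, -r} := by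
  ext x
  simp only [pmSet, Set.mem_union, Set.mem_ofPred_eq, Set.mem_add, Set.mem_insert_iff,
    Set.mem_singleton_iff]
  constructor
  · rintro (⟨s, hs, rfl⟩ | ⟨s, hs, rfl⟩)
    exacts [⟨s, hs, r, Or.inl rfl, rfl⟩, ⟨s, hs, -r, Or.inr rfl, by ring⟩]
  · rintro ⟨s, hs, _, rfl | rfl, rfl⟩
    exacts [Or.inl ⟨s, hs, rfl⟩, Or.inr ⟨s, hs, by ring⟩]

theorem Dcol_succ_eq_add {n i : ℕ} (D1 : Set ℤ) (hi : i < n) :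
    Dcol n D1 (i + 1) = D1 + offsets n i := by
  induction i with
  | zero => simp [Dcol, offsets_zero]
  | succ i ih => rw [Dcol, pmSet_eq_add, ih (by omega), add_assoc, offsets_succ (by omega)]

section partition

variable {α : ℝ} (hα : ⌊α⌋ = 1)
include hα

theorem Dcol_pairwiseDisjoint (n : ℕ) :
    Set.PairwiseDisjoint (Set.Icc 1 n) (Dcol n {x | ∃ k, 1 ≤ k ∧ x = tSeq α n k}) := by
  rintro j ⟨hj1, hjn⟩ j' ⟨hj'1, hj'n⟩ hne
  obtain ⟨i, rfl⟩ : ∃ i, j = i + 1 := ⟨j - 1, by omega⟩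
  obtain ⟨i', rfl⟩ : ∃ i', j' = i' + 1 := ⟨j' - 1, by omega⟩
  refine Set.disjoint_left.2 fun m hm hm' => hne ?_
  rw [Dcol_succ_eq_add _ (by omega)] at hm hm'
  obtain ⟨_, ⟨k, -, rfl⟩, e, he, rfl⟩ := hm
  obtain ⟨_, ⟨k', -, rfl⟩, e', he', heq⟩ := hm'
  beta_reduce at heq
  have := abs_lt.1 (abs_lt_of_mem_offsets (by omega) he)
  have := abs_lt.1 (abs_lt_of_mem_offsets (by omega) he')
  suffices (2 : ℤ) ^ (n - 1) ∣ e' - e by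
    rw [eq_of_mem_offsets_of_two_pow_dvd_sub (by omega) (by omega) he' he this]
  rcases le_total k k' with hk | hk
  · rw [show e' - e = -(tSeq α n k' - tSeq α n k) by omega, dvd_neg]
    exact two_pow_dvd_tSeq_sub hα n hk (by omega)
  · rw [show e' - e = tSeq α n k - tSeq α n k' by omega]
    exact two_pow_dvd_tSeq_sub hα n hk (by omega)

theorem iUnion_Dcol {n : ℕ} (hn : 1 ≤ n) :
    ⋃ j ∈ Set.Icc 1 n, Dcol n {x | ∃ k, 1 ≤ k ∧ x = tSeq α n k} j = {m : ℤ | 0 < m} := by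
  ext m
  simp only [Set.mem_iUnion, Set.mem_Icc, exists_prop, Set.mem_ofPred_eq]
  constructor
  · rintro ⟨j, ⟨hj1, hjn⟩, hm⟩
    obtain ⟨i, rfl⟩ : ∃ i, j = i + 1 := ⟨j - 1, by omega⟩
    rw [Dcol_succ_eq_add _ (by omega)] at hm
    obtain ⟨_, ⟨k, hk, rfl⟩, e, he, rfl⟩ := hm
    have htk := (tSeq_strictMono hα n).monotone hk
    rw [tSeq_one hα] at htk
    have := abs_lt.1 (abs_lt_of_mem_offsets (by omega) he)
    beta_reduce
    omega
  · intro hm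
    obtain ⟨k, hk, hmk⟩ := exists_abs_sub_tSeq_lt hα n hm
    obtain ⟨i, hi, he⟩ := exists_mem_offsets hn hmk
    refine ⟨i + 1, ⟨by omega, hi⟩, ?_⟩
    rw [Dcol_succ_eq_add _ hi]
    exact ⟨_, ⟨k, hk, rfl⟩, _, he, add_sub_cancel _ _⟩

end partition

theorem beatty_n_set_partition (α : ℝ) (hα1 : 1 ≤ α) (hα2 : α < 2)
    (n : ℕ) (hn : 2 ≤ n) :
    tSeq α n 1 = 2 ^ (n-1) ∧
    (∀ k, 1 ≤ k → ∃ b, 1 ≤ b ∧ b ≤ n ∧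
      tSeq α n (k+1) - tSeq α n k = ∑ i ∈ Finset.Icc 1 b, (2:ℤ) ^ (n - i)) ∧
    Set.PairwiseDisjoint (Set.Icc 1 n)
      (fun j => Dcol n {x | ∃ k, 1 ≤ k ∧ x = tSeq α n k} j) ∧
    (⋃ j ∈ Set.Icc 1 n, Dcol n {x | ∃ k, 1 ≤ k ∧ x = tSeq α n k} j)
      = {m : ℤ | 0 < m} := by
  have hα : ⌊α⌋ = 1 := Int.floor_eq_iff.2 ⟨mod_cast hα1, by push_cast; linarith⟩
  refine ⟨tSeq_one hα n, fun k _ => ?_, Dcol_pairwiseDisjoint hα n, iUnion_Dcol hα (by omega)⟩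
  rcases tSeq_succ_sub hα n k with h | h
  · exact ⟨1, le_rfl, by omega, by simpa using h⟩
  · refine ⟨n, by omega, le_rfl, ?_⟩
    rw [h, sum_Icc_two_pow_sub, ← pow_succ', Nat.sub_add_cancel (by omega)]
end

section
/- (KLM formula) For every positive integer n and all integers K, L, M such that K·a(n) + L·n + M is a positive integer, a(K·a(n) + L·n + M) = K·b(n) + L·a(n) + ⌊Mφ + (Lφ − K)·{nφ}/φ⌋. -/
/-!
Write `f = {nφ}`, so `a(n) = nφ - f` and, since `φ² = φ + 1`, `b(n) = a(n) + n`. Using `φ² = φ + 1`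
once more, `(K a(n) + L n + M) φ` splits as the integer `K b(n) + L a(n)` plus
`M φ + (L φ - K) f / φ`, and an integer comes out of a floor.
-/

noncomputable def φ : ℝ := (1 + Real.sqrt 5) / 2
noncomputable def a (n : ℕ) : ℤ := ⌊(n : ℝ) * φ⌋
noncomputable def b (n : ℕ) : ℤ := ⌊(n : ℝ) * φ ^ 2⌋

theorem φ_sq : φ ^ 2 = φ + 1 := Real.goldenRatio_sq

theorem b_eq_a_add (n : ℕ) : b n = a n + n := by
  rw [b, a, φ_sq, mul_add_one, ← Int.cast_natCast, Int.floor_add_intCast]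

theorem mul_eq_floor_add_fract_of_sq_eq_add_one {r : ℝ} (hr : r ^ 2 = r + 1) (x K L M : ℝ) :
    (K * ⌊x * r⌋ + L * x + M) * r
      = K * (⌊x * r⌋ + x) + L * ⌊x * r⌋ + (M * r + (L * r - K) * Int.fract (x * r) / r) := by
  have hr0 : r ≠ 0 := by rintro rfl; norm_num at hr
  rw [← Int.self_sub_fract (x * r)]
  field_simp
  linear_combination K * (x * r - Int.fract (x * r)) * hr

theorem klm_formula_general (n : ℕ) (K L M : ℤ) :
    ⌊((K * a n + L * (n : ℤ) + M : ℤ) : ℝ) * φ⌋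
      = K * b n + L * a n
        + ⌊(M : ℝ) * φ + ((L : ℝ) * φ - (K : ℝ)) * Int.fract ((n : ℝ) * φ) / φ⌋ := by
  have key := mul_eq_floor_add_fract_of_sq_eq_add_one φ_sq n K L M
  rw [← a] at key
  rw [b_eq_a_add, ← Int.floor_intCast_add]
  push_cast
  rw [key]

/-- The KLM formula. -/
theorem klm_formula (n : ℕ) (hn : 0 < n) (K L M : ℤ)
    (hpos : 0 < K * a n + L * (n : ℤ) + M) :
    ⌊((K * a n + L * (n : ℤ) + M : ℤ) : ℝ) * φ⌋
      = K * b n + L * a n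
        + ⌊(M : ℝ) * φ + ((L : ℝ) * φ - (K : ℝ)) * Int.fract ((n : ℝ) * φ) / φ⌋ :=
  klm_formula_general n K L M
end

section
/- For every positive integer n, {a(n)·φ} = 1 − {nφ}/φ and {b(n)·φ} = {nφ}/φ². -/
/-! Write `x = m φ` and `f = fract x`. From `φ ^ 2 = φ + 1` and `φ⁻¹ = φ - 1` one gets
`⌊x⌋ φ = m + ⌊x⌋ - f / φ`, and since `⌊m φ ^ 2⌋ = m + ⌊x⌋` also
`⌊m φ ^ 2⌋ φ = m + 2 ⌊x⌋ + f / φ ^ 2`. As `φ` is irrational, `0 < f < 1` for `m ≠ 0`, so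
`1 - f / φ` and `f / φ ^ 2` lie in `[0, 1)` and are the fractional parts. -/

open Real Int

theorem fract_intCast_mul_goldenRatio_pos {m : ℤ} (hm : m ≠ 0) : 0 < fract (m * goldenRatio) :=
  (fract_nonneg _).lt_of_ne' fun h ↦
    (goldenRatio_irrational.intCast_mul hm).ne_int ⌊m * goldenRatio⌋
      (by linarith [floor_add_fract (m * goldenRatio)])

theorem floor_intCast_mul_goldenRatio_mul_goldenRatio (m : ℤ) :
    (⌊m * goldenRatio⌋ : ℝ) * goldenRatio =
      ((m + ⌊m * goldenRatio⌋ : ℤ) : ℝ) - fract (m * goldenRatio) / goldenRatio := by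
  rw [← self_sub_fract, div_eq_mul_inv, inv_goldenRatio, ← one_sub_goldenConj]
  push_cast
  rw [← self_sub_fract]
  linear_combination (m : ℝ) * goldenRatio_sq

theorem fract_floor_intCast_mul_goldenRatio_mul_goldenRatio {m : ℤ} (hm : m ≠ 0) :
    fract ((⌊m * goldenRatio⌋ : ℝ) * goldenRatio) =
      1 - fract (m * goldenRatio) / goldenRatio := by
  have hpos : 0 < fract (m * goldenRatio) / goldenRatio :=
    div_pos (fract_intCast_mul_goldenRatio_pos hm) goldenRatio_pos
  have hlt : fract (m * goldenRatio) / goldenRatio < 1 :=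
    (div_lt_one goldenRatio_pos).2 ((fract_lt_one _).trans one_lt_goldenRatio)
  refine fract_eq_iff.2 ⟨by linarith, by linarith, m + ⌊m * goldenRatio⌋ - 1, ?_⟩
  rw [floor_intCast_mul_goldenRatio_mul_goldenRatio]
  push_cast
  ring

theorem floor_intCast_mul_goldenRatio_sq (m : ℤ) :
    ⌊m * goldenRatio ^ 2⌋ = m + ⌊m * goldenRatio⌋ := by
  rw [goldenRatio_sq, mul_add, mul_one, floor_add_intCast, add_comm]

theorem fract_floor_intCast_mul_goldenRatio_sq_mul_goldenRatio (m : ℤ) :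
    fract ((⌊m * goldenRatio ^ 2⌋ : ℝ) * goldenRatio) =
      fract (m * goldenRatio) / goldenRatio ^ 2 := by
  have hnonneg : 0 ≤ fract (m * goldenRatio) / goldenRatio ^ 2 :=
    div_nonneg (fract_nonneg _) (sq_nonneg _)
  have hlt : fract (m * goldenRatio) / goldenRatio ^ 2 < 1 :=
    (div_lt_one (by positivity)).2
      ((fract_lt_one _).trans (one_lt_pow₀ one_lt_goldenRatio two_ne_zero))
  refine fract_eq_iff.2 ⟨hnonneg, hlt, m + 2 * ⌊m * goldenRatio⌋, ?_⟩
  rw [floor_intCast_mul_goldenRatio_sq]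
  push_cast
  rw [add_mul, floor_intCast_mul_goldenRatio_mul_goldenRatio]
  push_cast
  rw [← self_sub_fract (m * goldenRatio), div_eq_mul_inv, div_eq_mul_inv, ← inv_pow,
    inv_goldenRatio]
  linear_combination -fract (m * goldenRatio) * goldenConj_sq

theorem fract_a_b_mul_phi (n : ℕ) (hn : 0 < n) :
    Int.fract ((a n : ℝ) * φ) = 1 - Int.fract ((n : ℝ) * φ) / φ ∧
    Int.fract ((b n : ℝ) * φ) = Int.fract ((n : ℝ) * φ) / φ ^ 2 := by
  have ha :=
    fract_floor_intCast_mul_goldenRatio_mul_goldenRatio (m := n) (by exact_mod_cast hn.ne')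
  have hb := fract_floor_intCast_mul_goldenRatio_sq_mul_goldenRatio n
  rw [cast_natCast] at ha hb
  -- `φ` is definitionally `goldenRatio`
  exact ⟨ha, hb⟩
end

section
/- Let r be an odd positive integer and n a positive integer. Then ⌊F_r·φ + (φ − 1)·{nφ}/φ⌋ = F_{r+1}, where F_k denotes the k-th Fibonacci number. -/
/-! Since `F_{r+1} - F_r φ = ψ^r = -φ⁻ʳ` for odd `r`, the quantity inside the floor is
`F_{r+1} + φ⁻ʳ + {nφ} φ⁻²`, and the excess lies in `[0, φ⁻¹ + φ⁻²) = [0, 1)`. -/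

namespace Real

theorem goldenRatio_sub_one : goldenRatio - 1 = goldenRatio⁻¹ := by
  rw [inv_goldenRatio, ← one_sub_goldenConj]
  ring

theorem goldenRatio_sub_one_mul_div_goldenRatio (x : ℝ) :
    (goldenRatio - 1) * x / goldenRatio = x * goldenRatio⁻¹ ^ 2 := by
  rw [goldenRatio_sub_one]
  ring

theorem inv_goldenRatio_add_inv_goldenRatio_sq : goldenRatio⁻¹ + goldenRatio⁻¹ ^ 2 = 1 := by
  rw [← goldenRatio_sub_one]
  linear_combination goldenRatio_sq

theorem fib_mul_goldenRatio_of_odd {r : ℕ} (hr : Odd r) :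
    (Nat.fib r : ℝ) * goldenRatio = Nat.fib (r + 1) + goldenRatio⁻¹ ^ r := by
  have h := fib_succ_sub_goldenRatio_mul_fib r
  rw [← neg_neg goldenConj, ← inv_goldenRatio, hr.neg_pow] at h
  linarith

theorem floor_fib_mul_goldenRatio_add_mul_inv_sq {r : ℕ} (hr : Odd r) {t : ℝ}
    (ht₀ : 0 ≤ t) (ht₁ : t < 1) :
    ⌊(Nat.fib r : ℝ) * goldenRatio + t * goldenRatio⁻¹ ^ 2⌋ = (Nat.fib (r + 1) : ℤ) := by
  have hinv₀ : 0 < goldenRatio⁻¹ := inv_pos.mpr goldenRatio_pos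
  have hinv₁ : goldenRatio⁻¹ < 1 := inv_lt_one_of_one_lt₀ one_lt_goldenRatio
  have hpow : goldenRatio⁻¹ ^ r ≤ goldenRatio⁻¹ :=
    pow_le_of_le_one hinv₀.le hinv₁.le hr.pos.ne'
  have hsq : t * goldenRatio⁻¹ ^ 2 < goldenRatio⁻¹ ^ 2 :=
    mul_lt_of_lt_one_left (by positivity) ht₁
  rw [fib_mul_goldenRatio_of_odd hr, Int.floor_eq_iff]
  push_cast
  constructor
  · have : 0 ≤ t * goldenRatio⁻¹ ^ 2 := by positivity
    have : 0 ≤ goldenRatio⁻¹ ^ r := by positivity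
    linarith
  · linarith [inv_goldenRatio_add_inv_goldenRatio_sq]

end Real

theorem floor_fib_phi_general (r : ℕ) (hr : Odd r) (n : ℕ) :
    ⌊(Nat.fib r : ℝ) * φ + (φ - 1) * Int.fract ((n : ℝ) * φ) / φ⌋
      = (Nat.fib (r + 1) : ℤ) := by
  have hφ : φ = Real.goldenRatio := rfl
  rw [hφ, Real.goldenRatio_sub_one_mul_div_goldenRatio]
  exact Real.floor_fib_mul_goldenRatio_add_mul_inv_sq hr (Int.fract_nonneg _) (Int.fract_lt_one _)

theorem floor_fib_phi (r : ℕ) (hr : Odd r) (hrpos : 0 < r) (n : ℕ) (hn : 0 < n) :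
    ⌊(Nat.fib r : ℝ) * φ + (φ - 1) * Int.fract ((n : ℝ) * φ) / φ⌋
      = (Nat.fib (r + 1) : ℤ) :=
  floor_fib_phi_general r hr n
end

section
/- Let r be an odd positive integer and let m and n be positive integers. If m = a(n) + n + F_r, then φ^r·{mφ} − φ^(r−2)·{nφ} = 1, where F_r is the r-th Fibonacci number. -/
/-!
Since `φ⁻¹ = -ψ` and `r` is odd, Binet's formula gives `F_r φ = F_{r+1} + φ^(-r)`, and writing
`⌊nφ⌋ = nφ - {nφ}` together with `φ² = φ + 1` gives `(⌊nφ⌋ + n) φ ≡ {nφ} φ^(-2) (mod ℤ)`.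
Hence `mφ ≡ φ^(-r) + {nφ} φ^(-2) (mod ℤ)`; the right-hand side lies in `[0, φ⁻¹ + φ⁻²) = [0, 1)`,
so it is `{mφ}`, and multiplying by `φ^r` gives the identity.
-/

namespace Real

theorem goldenRatio_mul_fib_of_odd {r : ℕ} (hr : Odd r) :
    goldenRatio * Nat.fib r = Nat.fib (r + 1) + goldenRatio⁻¹ ^ r := by
  rw [inv_goldenRatio, hr.neg_pow, ← fib_succ_sub_goldenRatio_mul_fib]
  ring

theorem floor_add_mul_goldenRatio (x : ℝ) :
    (⌊x * goldenRatio⌋ + x) * goldenRatio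
      = x + 2 * ⌊x * goldenRatio⌋ + Int.fract (x * goldenRatio) * goldenRatio⁻¹ ^ 2 := by
  rw [inv_goldenRatio, neg_sq, goldenConj_sq, ← Int.self_sub_fract (x * goldenRatio)]
  linear_combination x * goldenRatio_sq - Int.fract (x * goldenRatio) * goldenRatio_add_goldenConj

theorem fract_mul_goldenRatio_of_odd {r : ℕ} (hr : Odd r) (m n : ℤ)
    (hmn : m = ⌊n * goldenRatio⌋ + n + Nat.fib r) :
    Int.fract (m * goldenRatio)
      = goldenRatio⁻¹ ^ r + Int.fract (n * goldenRatio) * goldenRatio⁻¹ ^ 2 := by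
  set t := Int.fract (n * goldenRatio)
  have hinv : 0 < goldenRatio⁻¹ := inv_pos.2 goldenRatio_pos
  have hinv_pow_le : goldenRatio⁻¹ ^ r ≤ goldenRatio⁻¹ :=
    pow_le_of_le_one hinv.le (inv_le_one_of_one_le₀ one_lt_goldenRatio.le) hr.pos.ne'
  rw [Int.fract_eq_iff]
  refine ⟨by positivity, ?_, Nat.fib (r + 1) + n + 2 * ⌊n * goldenRatio⌋, ?_⟩
  · have : t * goldenRatio⁻¹ ^ 2 < goldenRatio⁻¹ ^ 2 :=
      mul_lt_of_lt_one_left (by positivity) (Int.fract_lt_one _)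
    linarith [inv_goldenRatio_add_inv_goldenRatio_sq]
  · rw [hmn]
    push_cast
    linear_combination floor_add_mul_goldenRatio n + goldenRatio_mul_fib_of_odd hr

end Real

theorem fib_shift_fract_identity_general (r : ℕ) (hr : Odd r)
    (m n : ℕ)
    (hmn : (m : ℤ) = a n + n + Nat.fib r) :
    φ ^ (r : ℤ) * Int.fract ((m : ℝ) * φ)
      - φ ^ ((r : ℤ) - 2) * Int.fract ((n : ℝ) * φ) = 1 := by
  have hφ : φ = Real.goldenRatio := rfl
  have hfract := Real.fract_mul_goldenRatio_of_odd hr m n (by exact_mod_cast hmn)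
  push_cast at hfract
  rw [hφ, hfract, zpow_sub₀ Real.goldenRatio_ne_zero, zpow_natCast, zpow_ofNat, mul_add,
    ← mul_pow, mul_inv_cancel₀ Real.goldenRatio_ne_zero, one_pow, div_eq_mul_inv, ← inv_pow]
  ring

theorem fib_shift_fract_identity (r : ℕ) (hr : Odd r) (hrpos : 0 < r)
    (m n : ℕ) (hm : 0 < m) (hn : 0 < n)
    (hmn : (m : ℤ) = a n + n + Nat.fib r) :
    φ ^ (r : ℤ) * Int.fract ((m : ℝ) * φ)
      - φ ^ ((r : ℤ) - 2) * Int.fract ((n : ℝ) * φ) = 1 :=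
  fib_shift_fract_identity_general r hr m n hmn
end

section
/- For every positive integer n, ⌊nφ³⌋ is a member of the Beatty sequence A = {⌊mφ⌋ : m a positive integer}; that is, there exists a positive integer m with ⌊nφ³⌋ = ⌊mφ⌋. -/
open Real

theorem Int.floor_two_mul_eq_or {α : Type*} [Ring α] [LinearOrder α] [IsStrictOrderedRing α]
    [FloorRing α] (x : α) : ⌊2 * x⌋ = 2 * ⌊x⌋ ∨ ⌊2 * x⌋ = 2 * ⌊x⌋ + 1 := by
  have hlower : 2 * ⌊x⌋ ≤ ⌊2 * x⌋ := Int.le_floor.mpr (by push_cast; gcongr; exact Int.floor_le x)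
  have hupper : ⌊2 * x⌋ < 2 * ⌊x⌋ + 2 := Int.floor_lt.mpr <| by
    push_cast
    rw [← mul_add_one]
    exact mul_lt_mul_of_pos_left (Int.lt_floor_add_one x) two_pos
  omega

theorem goldenRatio_pow_three : goldenRatio ^ 3 = 2 * goldenRatio + 1 := by
  linear_combination (goldenRatio + 1) * goldenRatio_sq

theorem floor_add_floor_mul_goldenRatio_add_mul_goldenRatio (n j : ℤ) (hj : j = 0 ∨ j = 1) :
    ⌊((n + ⌊n * goldenRatio⌋ + j : ℤ) : ℝ) * goldenRatio⌋ = n + 2 * ⌊n * goldenRatio⌋ + j := by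
  set k := ⌊n * goldenRatio⌋
  have hle : (k : ℝ) ≤ n * goldenRatio := Int.floor_le _
  have hlt : n * goldenRatio < k + 1 := Int.lt_floor_add_one _
  have hexpand : ((n + k + j : ℤ) : ℝ) * goldenRatio
      = n + 2 * k + j + ((n * goldenRatio - k) * (2 - goldenRatio) + j * (goldenRatio - 1)) := by
    simp only [Int.cast_add]
    linear_combination (n : ℝ) * goldenRatio_sq
  have hφ1 := one_lt_goldenRatio
  have hφ2 := goldenRatio_lt_two
  rw [Int.floor_eq_iff, hexpand]
  rcases hj with rfl | rfl <;> push_cast <;> constructor <;> nlinarith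

theorem phi_cubed_beatty_in_A (n : ℕ) (hn : 0 < n) :
    ∃ m : ℕ, 0 < m ∧ ⌊(n : ℝ) * φ ^ 3⌋ = ⌊(m : ℝ) * φ⌋ := by
  have hφ : φ = goldenRatio := rfl
  set k := ⌊(n : ℤ) * goldenRatio⌋
  have hk : 0 ≤ k := Int.floor_nonneg.mpr (by positivity)
  have hcube : ⌊(n : ℝ) * φ ^ 3⌋ = n + ⌊2 * ((n : ℤ) * goldenRatio)⌋ := by
    rw [hφ, goldenRatio_pow_three, Int.cast_natCast, ← Int.floor_natCast_add]
    ring_nf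
  obtain ⟨j, hj, hfloor⟩ : ∃ j : ℤ, (j = 0 ∨ j = 1) ∧ ⌊(n : ℝ) * φ ^ 3⌋ = n + 2 * k + j := by
    rcases Int.floor_two_mul_eq_or ((n : ℤ) * goldenRatio) with h | h
    · exact ⟨0, .inl rfl, by rw [hcube, h]; ring⟩
    · exact ⟨1, .inr rfl, by rw [hcube, h]; ring⟩
  obtain ⟨m, hm⟩ : ∃ m : ℕ, (n : ℤ) + k + j = m := Int.eq_ofNat_of_zero_le (by omega)
  refine ⟨m, by omega, ?_⟩
  rw [hfloor, hφ, ← Int.cast_natCast m, ← hm,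
    floor_add_floor_mul_goldenRatio_add_mul_goldenRatio n j hj]
end
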